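/- Let (t₀, x₀) ∈ ℝ², a, b > 0, R = {(t,x) : |t − t₀| ≤ a, |x − x₀| ≤ b}, let f : ℝ × ℝ → ℝ be continuous and Lipschitz in the second variable on R with constant L > 0, let M = max_R |f| with M > 0, A = min{a, b/M}, J = [t₀ − A, t₀ + A], and S = { x ∈ C(J) : |x(t) − x₀| ≤ b for all t ∈ J }. Let L̃ > L, and define ‖z‖_e = max_{t∈J} |z(t)·e^{−L̃|t−t₀|}| and F(x)(t) = (1 + c₀)·x(t) − c₀·( x₀ + ∫_{t₀}^{t} f(ξ, x(ξ)) dξ ). If c₀ ∈ [−1, 0) and x, y ∈ S, then ‖F(x) − F(y)‖_e ≤ k·‖x − y‖_e, where k = 1 + (1 − (L/L̃)·(1 − e^{−L̃ A}))·c₀ and 0 < k < 1; that is, F is a contraction on S with respect to the weighted norm ‖·‖_e, with contraction constant k. -/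

import Mathlib

/-!
Write `N = ‖x - y‖ₑ`, so that `|x ξ - y ξ| ≤ N e^{L̃|ξ - t₀|}` on `J`. Since `c₀ ∈ [-1, 0)`,
`F x - F y` combines `x - y` and `∫ (f(ξ, x ξ) - f(ξ, y ξ)) dξ` with the nonnegative weights
`1 + c₀` and `-c₀`. By the Lipschitz bound the integral is at most
`∫ L N e^{L̃|ξ - t₀|} dξ = (L N / L̃)(e^{L̃|t - t₀|} - 1)`; multiplied by `e^{-L̃|t - t₀|}` this is
`(L N / L̃)(1 - e^{-L̃|t - t₀|}) ≤ (L N / L̃)(1 - e^{-L̃A})`. The two contributions add up to `k N`.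
-/

open Real Set MeasureTheory

theorem integral_exp_mul_abs_of_nonneg {ℓ u : ℝ} (hℓ : ℓ ≠ 0) (hu : 0 ≤ u) :
    ∫ s in (0 : ℝ)..u, exp (ℓ * |s|) = (exp (ℓ * u) - 1) / ℓ := by
  have habs : EqOn (fun s => exp (ℓ * |s|)) (fun s => exp (ℓ * s)) (uIcc 0 u) := fun s hs => by
    rw [uIcc_of_le hu] at hs
    simp only [abs_of_nonneg hs.1]
  rw [intervalIntegral.integral_congr habs, intervalIntegral.integral_comp_mul_left exp hℓ,
    integral_exp, mul_zero, exp_zero, smul_eq_mul, inv_mul_eq_div]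

theorem abs_integral_exp_mul_abs {ℓ : ℝ} (hℓ : ℓ ≠ 0) (u : ℝ) :
    |∫ s in (0 : ℝ)..u, exp (ℓ * |s|)| = (exp (ℓ * |u|) - 1) / ℓ := by
  rcases le_total 0 u with hu | hu
  · rw [abs_of_nonneg hu, ← integral_exp_mul_abs_of_nonneg hℓ hu]
    exact abs_of_nonneg (intervalIntegral.integral_nonneg hu fun s _ => (exp_pos _).le)
  · have heven :
        ∫ s in (0 : ℝ)..u, exp (ℓ * |s|) = -∫ s in (0 : ℝ)..-u, exp (ℓ * |s|) := by
      have hneg := intervalIntegral.integral_comp_neg (a := 0) (b := u) fun s => exp (ℓ * |s|)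
      simp only [abs_neg, neg_zero] at hneg
      rw [hneg, intervalIntegral.integral_symm 0 (-u)]
    rw [heven, abs_neg, abs_of_nonpos hu, ← integral_exp_mul_abs_of_nonneg hℓ (neg_nonneg.2 hu)]
    exact abs_of_nonneg
      (intervalIntegral.integral_nonneg (neg_nonneg.2 hu) fun s _ => (exp_pos _).le)

theorem abs_integral_le_of_abs_le_mul_exp {g : ℝ → ℝ} {C ℓ t₀ t : ℝ} (hℓ : ℓ ≠ 0)
    (hC : 0 ≤ C) (hg : ∀ ξ ∈ uIcc t₀ t, |g ξ| ≤ C * exp (ℓ * |ξ - t₀|)) :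
    |∫ ξ in t₀..t, g ξ| ≤ C * (exp (ℓ * |t - t₀|) - 1) / ℓ := by
  have hbound : IntervalIntegrable (fun ξ => C * exp (ℓ * |ξ - t₀|)) volume t₀ t :=
    (by fun_prop : Continuous fun ξ => C * exp (ℓ * |ξ - t₀|)).intervalIntegrable _ _
  have hg' : ∀ᵐ ξ ∂volume.restrict (uIoc t₀ t), ‖g ξ‖ ≤ C * exp (ℓ * |ξ - t₀|) :=
    ae_restrict_of_forall_mem measurableSet_uIoc fun ξ hξ => hg ξ (uIoc_subset_uIcc hξ)
  calc |∫ ξ in t₀..t, g ξ|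
      ≤ |∫ ξ in t₀..t, C * exp (ℓ * |ξ - t₀|)| := by
        simpa only [Real.norm_eq_abs] using
          intervalIntegral.norm_integral_le_abs_of_norm_le hg' hbound
    _ = C * |∫ s in (0 : ℝ)..t - t₀, exp (ℓ * |s|)| := by
        rw [intervalIntegral.integral_const_mul, abs_mul, abs_of_nonneg hC,
          intervalIntegral.integral_comp_sub_right (fun s => exp (ℓ * |s|)), sub_self]
    _ = C * (exp (ℓ * |t - t₀|) - 1) / ℓ := by
        rw [abs_integral_exp_mul_abs hℓ, mul_div_assoc]

theorem abs_le_mul_exp_of_abs_mul_exp_neg_le {z N ℓ r : ℝ} (h : |z * exp (-ℓ * r)| ≤ N) :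
    |z| ≤ N * exp (ℓ * r) := by
  rwa [abs_mul, abs_of_pos (exp_pos _), neg_mul, exp_neg, ← div_eq_mul_inv,
    div_le_iff₀ (exp_pos _)] at h

theorem div_mul_one_sub_exp_neg_mem_Ioo {L Lt A : ℝ} (hL : 0 < L) (hLt : L < Lt) (hA : 0 < A) :
    L / Lt * (1 - exp (-Lt * A)) ∈ Ioo 0 1 := by
  have hLt0 : 0 < Lt := hL.trans hLt
  have hratio : L / Lt ∈ Ioo 0 1 := ⟨div_pos hL hLt0, (div_lt_one hLt0).2 hLt⟩
  have hexp : exp (-Lt * A) ∈ Ioo 0 1 :=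
    ⟨exp_pos _, exp_lt_one_iff.2 (by nlinarith)⟩
  constructor <;> nlinarith [hratio.1, hratio.2, hexp.1, hexp.2]

theorem one_add_one_sub_mul_mem_Ioo {q c : ℝ} (hq : q ∈ Ioo 0 1) (hc : c ∈ Ico (-1) 0) :
    1 + (1 - q) * c ∈ Ioo 0 1 := by
  obtain ⟨hq0, hq1⟩ := hq
  obtain ⟨hc1, hc0⟩ := hc
  constructor <;> nlinarith

theorem abs_one_add_mul_sub_mul_mul_exp_neg_le {c L Lt r A u I N : ℝ} (hc : c ∈ Ico (-1) 0)
    (hL : 0 ≤ L) (hLt : 0 < Lt) (hr : r ≤ A) (hu : |u * exp (-Lt * r)| ≤ N)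
    (hI : |I| ≤ L * N * (exp (Lt * r) - 1) / Lt) :
    |((1 + c) * u - c * I) * exp (-Lt * r)|
      ≤ (1 + (1 - L / Lt * (1 - exp (-Lt * A))) * c) * N := by
  obtain ⟨hc1, hc0⟩ := hc
  set E := exp (-Lt * r) with hE
  have hE0 : 0 < E := exp_pos _
  have hN : 0 ≤ N := (abs_nonneg _).trans hu
  have hIE : |I| * E ≤ L * N / Lt * (1 - exp (-Lt * A)) :=
    calc |I| * E ≤ L * N * (exp (Lt * r) - 1) / Lt * E := by gcongr
      _ = L * N / Lt * (1 - E) := by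
        rw [hE, neg_mul, exp_neg]
        field_simp
      _ ≤ L * N / Lt * (1 - exp (-Lt * A)) := by
        gcongr
        exact exp_le_exp.2 (by nlinarith)
  calc |((1 + c) * u - c * I) * E| = |(1 + c) * (u * E) + (-c) * (I * E)| := by ring_nf
    _ ≤ (1 + c) * |u * E| + (-c) * (|I| * E) := by
        refine (abs_add_le _ _).trans_eq ?_
        rw [abs_mul, abs_mul (-c), abs_mul I, abs_of_nonneg (by linarith : 0 ≤ 1 + c),
          abs_of_nonneg (by linarith : 0 ≤ -c), abs_of_pos hE0]
    _ ≤ (1 + c) * N + (-c) * (L * N / Lt * (1 - exp (-Lt * A))) := by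
        gcongr <;> linarith
    _ = (1 + (1 - L / Lt * (1 - exp (-Lt * A))) * c) * N := by ring

theorem stmt_9_general (f : ℝ → ℝ → ℝ) (hf : Continuous fun p : ℝ × ℝ => f p.1 p.2)
    (t₀ x₀ a b L Lt M A : ℝ) (ha : 0 < a) (hb : 0 < b) (hL : 0 < L)
    (R : Set (ℝ × ℝ)) (hR : R = {p : ℝ × ℝ | |p.1 - t₀| ≤ a ∧ |p.2 - x₀| ≤ b})
    (hLip : ∀ t y z, (t, y) ∈ R → (t, z) ∈ R → |f t y - f t z| ≤ L * |y - z|)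
    (hM0 : 0 < M)
    (hA : A = min a (b / M)) (hLt : L < Lt)
    (c₀ : ℝ) (hc₀ : c₀ ∈ Set.Ico (-1 : ℝ) 0)
    (x y : ℝ → ℝ)
    (hxc : ContinuousOn x (Set.Icc (t₀ - A) (t₀ + A)))
    (hxb : ∀ t ∈ Set.Icc (t₀ - A) (t₀ + A), |x t - x₀| ≤ b)
    (hyc : ContinuousOn y (Set.Icc (t₀ - A) (t₀ + A)))
    (hyb : ∀ t ∈ Set.Icc (t₀ - A) (t₀ + A), |y t - x₀| ≤ b)
    (k : ℝ) (hk : k = 1 + (1 - (L / Lt) * (1 - Real.exp (-Lt * A))) * c₀)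
    (normFE normE : ℝ)
    (hnormFE : IsGreatest
      ((fun t =>
        |(((1 + c₀) * x t - c₀ * (x₀ + ∫ ξ in t₀..t, f ξ (x ξ)))
            - ((1 + c₀) * y t - c₀ * (x₀ + ∫ ξ in t₀..t, f ξ (y ξ))))
          * Real.exp (-Lt * |t - t₀|)|) '' Set.Icc (t₀ - A) (t₀ + A)) normFE)
    (hnormE : IsGreatest
      ((fun t => |(x t - y t) * Real.exp (-Lt * |t - t₀|)|) ''
        Set.Icc (t₀ - A) (t₀ + A)) normE) :
    (0 < k ∧ k < 1) ∧ normFE ≤ k * normE := by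
  have hA0 : 0 < A := hA ▸ lt_min ha (div_pos hb hM0)
  have hLt0 : 0 < Lt := hL.trans hLt
  refine ⟨hk ▸ one_add_one_sub_mul_mem_Ioo (div_mul_one_sub_exp_neg_mem_Ioo hL hLt hA0) hc₀,
    ?_⟩
  obtain ⟨t, ht, rfl⟩ := hnormFE.1
  have hsub : uIcc t₀ t ⊆ Icc (t₀ - A) (t₀ + A) :=
    uIcc_subset_Icc ⟨by linarith, by linarith⟩ ht
  have hdist : ∀ s ∈ Icc (t₀ - A) (t₀ + A), |s - t₀| ≤ A := fun s hs =>
    abs_sub_le_iff.2 ⟨by linarith [hs.2], by linarith [hs.1]⟩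
  have hmemR : ∀ z : ℝ → ℝ, (∀ s ∈ Icc (t₀ - A) (t₀ + A), |z s - x₀| ≤ b) →
      ∀ ξ ∈ uIcc t₀ t, (ξ, z ξ) ∈ R := fun z hz ξ hξ =>
    hR ▸ ⟨(hdist ξ (hsub hξ)).trans (hA ▸ min_le_left _ _), hz ξ (hsub hξ)⟩
  have hint : ∀ z : ℝ → ℝ, ContinuousOn z (Icc (t₀ - A) (t₀ + A)) →
      IntervalIntegrable (fun ξ => f ξ (z ξ)) volume t₀ t := fun z hz =>
    ((hf.comp_continuousOn (continuousOn_id.prodMk hz)).mono hsub).intervalIntegrable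
  have hdiff : ∀ ξ ∈ uIcc t₀ t,
      |f ξ (x ξ) - f ξ (y ξ)| ≤ L * normE * exp (Lt * |ξ - t₀|) := fun ξ hξ =>
    calc |f ξ (x ξ) - f ξ (y ξ)| ≤ L * |x ξ - y ξ| :=
          hLip ξ _ _ (hmemR x hxb ξ hξ) (hmemR y hyb ξ hξ)
      _ ≤ L * normE * exp (Lt * |ξ - t₀|) := by
          rw [mul_assoc]
          exact mul_le_mul_of_nonneg_left
            (abs_le_mul_exp_of_abs_mul_exp_neg_le (hnormE.2 ⟨ξ, hsub hξ, rfl⟩)) hL.le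
  have hnormE0 : 0 ≤ normE := (abs_nonneg _).trans (hnormE.2 ⟨t, ht, rfl⟩)
  have hI := abs_integral_le_of_abs_le_mul_exp hLt0.ne' (by positivity) hdiff
  have hsplit : (1 + c₀) * x t - c₀ * (x₀ + ∫ ξ in t₀..t, f ξ (x ξ))
      - ((1 + c₀) * y t - c₀ * (x₀ + ∫ ξ in t₀..t, f ξ (y ξ)))
      = (1 + c₀) * (x t - y t) - c₀ * ∫ ξ in t₀..t, f ξ (x ξ) - f ξ (y ξ) := by
    rw [intervalIntegral.integral_sub (hint x hxc) (hint y hyc)]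
    ring
  show |_ * _| ≤ _
  rw [hsplit, hk]
  exact abs_one_add_mul_sub_mul_mul_exp_neg_le hc₀ hL.le hLt0 (hdist t ht)
    (hnormE.2 ⟨t, ht, rfl⟩) hI

/-- Proposition 5 (part 2): for `c₀ ∈ [-1, 0)` the IFOHAM fixed-point operator
`F(x)(t) = (1 + c₀)·x(t) - c₀·(x₀ + ∫ₜ₀ᵗ f(ξ, x ξ) dξ)` is a contraction on
`S = {x ∈ C(J) : |x(t) - x₀| ≤ b}` in the weighted norm
`‖z‖ₑ = max_{t∈J} |z(t)·e^{-L̃|t-t₀|}|`, with contraction constant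
`k = 1 + (1 - (L/L̃)(1 - e^{-L̃A}))·c₀ ∈ (0, 1)`. -/
theorem stmt_9 (f : ℝ → ℝ → ℝ) (hf : Continuous fun p : ℝ × ℝ => f p.1 p.2)
    (t₀ x₀ a b L Lt M A : ℝ) (ha : 0 < a) (hb : 0 < b) (hL : 0 < L)
    (R : Set (ℝ × ℝ)) (hR : R = {p : ℝ × ℝ | |p.1 - t₀| ≤ a ∧ |p.2 - x₀| ≤ b})
    (hLip : ∀ t y z, (t, y) ∈ R → (t, z) ∈ R → |f t y - f t z| ≤ L * |y - z|)
    (hM : IsGreatest ((fun p : ℝ × ℝ => |f p.1 p.2|) '' R) M) (hM0 : 0 < M)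
    (hA : A = min a (b / M)) (hLt : L < Lt)
    (c₀ : ℝ) (hc₀ : c₀ ∈ Set.Ico (-1 : ℝ) 0)
    (x y : ℝ → ℝ)
    (hxc : ContinuousOn x (Set.Icc (t₀ - A) (t₀ + A)))
    (hxb : ∀ t ∈ Set.Icc (t₀ - A) (t₀ + A), |x t - x₀| ≤ b)
    (hyc : ContinuousOn y (Set.Icc (t₀ - A) (t₀ + A)))
    (hyb : ∀ t ∈ Set.Icc (t₀ - A) (t₀ + A), |y t - x₀| ≤ b)
    (k : ℝ) (hk : k = 1 + (1 - (L / Lt) * (1 - Real.exp (-Lt * A))) * c₀)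
    (normFE normE : ℝ)
    (hnormFE : IsGreatest
      ((fun t =>
        |(((1 + c₀) * x t - c₀ * (x₀ + ∫ ξ in t₀..t, f ξ (x ξ)))
            - ((1 + c₀) * y t - c₀ * (x₀ + ∫ ξ in t₀..t, f ξ (y ξ))))
          * Real.exp (-Lt * |t - t₀|)|) '' Set.Icc (t₀ - A) (t₀ + A)) normFE)
    (hnormE : IsGreatest
      ((fun t => |(x t - y t) * Real.exp (-Lt * |t - t₀|)|) ''
        Set.Icc (t₀ - A) (t₀ + A)) normE) :
    (0 < k ∧ k < 1) ∧ normFE ≤ k * normE :=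
  stmt_9_general f hf t₀ x₀ a b L Lt M A ha hb hL R hR hLip hM0 hA hLt c₀ hc₀ x y hxc hxb hyc hyb k
    hk normFE normE hnormFE hnormE
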